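/- arXiv:1801.02812 — 2 statements merged into one kernel-verified Lean document; each statement's English description precedes it below -/
import Mathlib

section
/- Let X^*, Y^* be filtered simplicial complexes on finite vertex sets, f : X^* → Y^* and g : Y^* → X^* morphisms, and R a correspondence between the vertex sets containing the graphs of both f and g. Then (f, g) is a dis(R)-interleaving; consequently d_I^F(X^*, Y^*) ≤ 2 d_GH(X^*, Y^*). -/
open Finset Function

noncomputable section
open scoped Classical

variable {V W U : Type} [Fintype V] [Fintype W] [Fintype U]

/-- A size function is monotone on nonempty subsets. -/
def Monot (D : Finset V → ℝ) : Prop :=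
  ∀ ⦃α β : Finset V⦄, α.Nonempty → α ⊆ β → D α ≤ D β

/-- `max 0 (sup over nonempty subsets of the vertex set of g)`. -/
def supSub (g : Finset V → ℝ) : ℝ :=
  ((Finset.univ : Finset V).powerset.filter Finset.Nonempty).fold max 0 g

/-- Degree of a morphism: least `r ≥ 0` with `D_Y (f α) ≤ D_X α + r` for all nonempty `α`. -/
def degF (DX : Finset V → ℝ) (DY : Finset W → ℝ) (f : V → W) : ℝ :=
  supSub fun α => DY (α.image f) - DX α

/-- Codegree: least `r ≥ 0` with `D_Y (f α ∪ g α) ≤ D_X α + r` for all nonempty `α`. -/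
def codegF (DX : Finset V → ℝ) (DY : Finset W → ℝ) (f g : V → W) : ℝ :=
  supSub fun α => DY (α.image f ∪ α.image g) - DX α

/-- `codeg^∞`: minimum over chains `f = F 0, …, F n = g` of the max codegree of
consecutive terms. -/
def codegInfF (DX : Finset V → ℝ) (DY : Finset W → ℝ) (f g : V → W) : ℝ :=
  sInf { c : ℝ | ∃ n : ℕ, 0 < n ∧ ∃ F : ℕ → V → W, F 0 = f ∧ F n = g ∧
    c = (Finset.range n).fold max 0 fun i => codegF DX DY (F i) (F (i + 1)) }

/-- `(f, g)` is an `ε`-interleaving between the filtered complexes given by `DX`, `DY`. -/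
def IsInterleaving (DX : Finset V → ℝ) (DY : Finset W → ℝ)
    (f : V → W) (g : W → V) (ε : ℝ) : Prop :=
  degF DX DY f ≤ ε ∧ degF DY DX g ≤ ε ∧
  codegInfF DX DX (g ∘ f) id ≤ 2 * ε ∧ codegInfF DY DY (f ∘ g) id ≤ 2 * ε

/-- The interleaving distance between filtered simplicial complexes. -/
def dIF (DX : Finset V → ℝ) (DY : Finset W → ℝ) : ℝ :=
  sInf { ε : ℝ | 0 ≤ ε ∧ ∃ f g, IsInterleaving DX DY f g ε }

/-- The vertex quasi-distance `δ_X(v,w)`. -/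
def vqd (D : Finset V → ℝ) (v w : V) : ℝ :=
  supSub fun α => D (insert w α) - D (insert v α)

/-- Distortion of a correspondence `R ⊆ V × W`, viewed as a tripod via the projections. -/
def corDis (DX : Finset V → ℝ) (DY : Finset W → ℝ) (R : Finset (V × W)) : ℝ :=
  (R.powerset.filter Finset.Nonempty).fold max 0 fun α =>
    |DX (α.image Prod.fst) - DY (α.image Prod.snd)|

/-- Gromov–Hausdorff distance (via correspondences). -/
def dGHcor (DX : Finset V → ℝ) (DY : Finset W → ℝ) : ℝ :=
  (1 / 2) * sInf { c : ℝ | ∃ R : Finset (V × W),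
    (∀ v : V, ∃ w, (v, w) ∈ R) ∧ (∀ w : W, ∃ v, (v, w) ∈ R) ∧ c = corDis DX DY R }

/-- Distortion of a tripod `(Z, p, q)`. -/
def trdis (DX : Finset V → ℝ) (DY : Finset W → ℝ) {Z : Type} [Fintype Z]
    (p : Z → V) (q : Z → W) : ℝ :=
  supSub fun α : Finset Z => |DX (α.image p) - DY (α.image q)|

/-- Gromov–Hausdorff distance between filtered simplicial complexes (via tripods). -/
def dGHtri (DX : Finset V → ℝ) (DY : Finset W → ℝ) : ℝ :=
  (1 / 2) * sInf { c : ℝ | ∃ (Z : Type) (_i : Fintype Z) (p : Z → V) (q : Z → W),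
    Surjective p ∧ Surjective q ∧ c = trdis DX DY p q }

/-- Diameter of a finite subset of a metric space. -/
def fdiam {M : Type} [MetricSpace M] (σ : Finset M) : ℝ :=
  (σ ×ˢ σ).fold max 0 fun p => dist p.1 p.2

/-- Metric distortion of a correspondence between metric spaces. -/
def metDis {M N : Type} [MetricSpace M] [MetricSpace N] (R : Finset (M × N)) : ℝ :=
  (R ×ˢ R).fold max 0 fun p => |dist p.1.1 p.2.1 - dist p.1.2 p.2.2|

/-- Gromov–Hausdorff distance between finite metric spaces. -/
def dGHmet (M N : Type) [MetricSpace M] [MetricSpace N] : ℝ :=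
  (1 / 2) * sInf { c : ℝ | ∃ R : Finset (M × N),
    (∀ x : M, ∃ y, (x, y) ∈ R) ∧ (∀ y : N, ∃ x, (x, y) ∈ R) ∧ c = metDis R }

/-! The graph of `f` over `α` is a subset of `R` whose projections are `α` and `f α`, so the
distortion of `R` gives `|D_X α - D_Y (f α)| ≤ dis R`, whence `deg f ≤ dis R`. Adding the pairs
`(g (f v), f v)` keeps the second projection `f α` and enlarges the first to `α ∪ g f α`, so
`D_X (α ∪ g f α) ≤ D_Y (f α) + dis R ≤ D_X α + 2 dis R`; a chain of length one bounds `codeg^∞`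
by `codeg`. For the distances: a correspondence contains the graphs of maps in both directions,
and the two graphs of an interleaving pair form a correspondence. -/

lemma supSub_le {D : Finset V → ℝ} {b : ℝ} (hb : 0 ≤ b)
    (h : ∀ α : Finset V, α.Nonempty → D α ≤ b) : supSub D ≤ b :=
  (Finset.fold_max_le _).2 ⟨hb, fun α hα => h α (Finset.mem_filter.1 hα).2⟩

section Distortion

omit [Fintype V] [Fintype W]

variable (DX : Finset V → ℝ) (DY : Finset W → ℝ)

lemma corDis_nonneg (R : Finset (V × W)) : 0 ≤ corDis DX DY R :=
  ((Finset.fold_max_le _).1 le_rfl).1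

lemma abs_sub_le_corDis {R β : Finset (V × W)} (hβR : β ⊆ R) (hβ : β.Nonempty) :
    |DX (β.image Prod.fst) - DY (β.image Prod.snd)| ≤ corDis DX DY R :=
  (Finset.le_fold_max _).2 <|
    Or.inr ⟨β, Finset.mem_filter.2 ⟨Finset.mem_powerset.2 hβR, hβ⟩, le_rfl⟩

lemma corDis_image_swap_le (R : Finset (V × W)) :
    corDis DY DX (R.image Prod.swap) ≤ corDis DX DY R := by
  refine (Finset.fold_max_le _).2 ⟨corDis_nonneg DX DY R, fun β hβ => ?_⟩
  obtain ⟨hβR, hβ⟩ := Finset.mem_filter.1 hβ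
  have hswap : β.image Prod.swap ⊆ R := by
    rw [Finset.image_subset_iff]
    intro p hp
    obtain ⟨q, hq, rfl⟩ := Finset.mem_image.1 (Finset.mem_powerset.1 hβR hp)
    simpa using hq
  have h := abs_sub_le_corDis DX DY hswap (hβ.image _)
  rwa [Finset.image_image, Finset.image_image, Function.comp_def, Function.comp_def,
    abs_sub_comm] at h

lemma abs_sub_image_le_corDis {f : V → W} {R : Finset (V × W)} (hf : ∀ v, (v, f v) ∈ R)
    {α : Finset V} (hα : α.Nonempty) : |DX α - DY (α.image f)| ≤ corDis DX DY R := by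
  have h := abs_sub_le_corDis DX DY (β := α.image fun v => (v, f v))
    (Finset.image_subset_iff.2 fun v _ => hf v) (hα.image _)
  rwa [Finset.image_image, Finset.image_image, Function.comp_def, Finset.image_id'] at h

end Distortion

section Degree

omit [Fintype W]

variable (DX : Finset V → ℝ) (DY : Finset W → ℝ) {f : V → W} {R : Finset (V × W)}

lemma degF_le_corDis (hf : ∀ v, (v, f v) ∈ R) : degF DX DY f ≤ corDis DX DY R :=
  supSub_le (corDis_nonneg DX DY R) fun α hα => by
    linarith [(abs_le.1 (abs_sub_image_le_corDis DX DY hf hα)).1]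

lemma codegF_comp_id_le_two_mul_corDis {g : W → V} (hf : ∀ v, (v, f v) ∈ R)
    (hg : ∀ w, (g w, w) ∈ R) : codegF DX DX (g ∘ f) id ≤ 2 * corDis DX DY R := by
  refine supSub_le (by linarith [corDis_nonneg DX DY R]) fun α hα => ?_
  set β : Finset (V × W) := α.image (fun v => (v, f v)) ∪ α.image fun v => (g (f v), f v)
  have hβR : β ⊆ R := Finset.union_subset (Finset.image_subset_iff.2 fun v _ => hf v)
    (Finset.image_subset_iff.2 fun v _ => hg (f v))
  have hfst : β.image Prod.fst = α.image (g ∘ f) ∪ α.image id := by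
    simp only [β, Finset.image_union, Finset.image_image, Function.comp_def, Finset.image_id',
      Finset.image_id, Finset.union_comm]
  have hsnd : β.image Prod.snd = α.image f := by
    simp only [β, Finset.image_union, Finset.image_image, Function.comp_def, Finset.union_self]
  have hβ := abs_sub_le_corDis DX DY hβR (hα.image _).inl
  rw [hfst, hsnd] at hβ
  linarith [(abs_le.1 hβ).2, (abs_le.1 (abs_sub_image_le_corDis DX DY hf hα)).1]

end Degree

lemma codegInfF_le_max_codegF (DX DX' : Finset V → ℝ) (h₁ h₂ : V → V) :
    codegInfF DX DX' h₁ h₂ ≤ max (codegF DX DX' h₁ h₂) 0 := by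
  refine csInf_le ⟨0, ?_⟩ ⟨1, one_pos, fun i => if i = 0 then h₁ else h₂, rfl, rfl, ?_⟩
  · rintro c ⟨n, -, F, -, -, rfl⟩
    exact ((Finset.fold_max_le _).1 le_rfl).1
  · simp

lemma isInterleaving_corDis (DX : Finset V → ℝ) (DY : Finset W → ℝ) {f : V → W} {g : W → V}
    {R : Finset (V × W)} (hf : ∀ v, (v, f v) ∈ R) (hg : ∀ w, (g w, w) ∈ R) :
    IsInterleaving DX DY f g (corDis DX DY R) := by
  have hε := corDis_nonneg DX DY R
  have hswap := corDis_image_swap_le DX DY R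
  have hg' : ∀ w, (w, g w) ∈ R.image Prod.swap := fun w => Finset.mem_image_of_mem _ (hg w)
  have hf' : ∀ v, (f v, v) ∈ R.image Prod.swap := fun v => Finset.mem_image_of_mem _ (hf v)
  refine ⟨degF_le_corDis DX DY hf, (degF_le_corDis DY DX hg').trans hswap, ?_, ?_⟩
  · refine (codegInfF_le_max_codegF _ _ _ _).trans (max_le ?_ (by linarith))
    exact codegF_comp_id_le_two_mul_corDis DX DY hf hg
  · refine (codegInfF_le_max_codegF _ _ _ _).trans (max_le ?_ (by linarith))
    linarith [codegF_comp_id_le_two_mul_corDis DY DX hg' hf']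

lemma dIF_le_two_mul_dGHcor (DX : Finset V → ℝ) (DY : Finset W → ℝ) :
    dIF DX DY ≤ 2 * dGHcor DX DY := by
  set C := { c : ℝ | ∃ R : Finset (V × W),
    (∀ v : V, ∃ w, (v, w) ∈ R) ∧ (∀ w : W, ∃ v, (v, w) ∈ R) ∧ c = corDis DX DY R }
  have hC : 2 * dGHcor DX DY = sInf C := by rw [dGHcor]; ring
  rw [hC, dIF]
  rcases Set.eq_empty_or_nonempty { ε : ℝ | 0 ≤ ε ∧ ∃ f g, IsInterleaving DX DY f g ε }
    with hI | ⟨ε, -, f, g, -⟩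
  · rw [hI, Real.sInf_empty]
    exact Real.sInf_nonneg fun c ⟨R, _, _, hc⟩ => hc ▸ corDis_nonneg DX DY R
  refine csInf_le_csInf ⟨0, fun ε hε => hε.1⟩ ?_ ?_
  · exact ⟨_, Finset.univ.image (fun v => (v, f v)) ∪ Finset.univ.image (fun w => (g w, w)),
      fun v => ⟨f v, by simp⟩, fun w => ⟨g w, by simp⟩, rfl⟩
  · rintro c ⟨R, hRV, hRW, rfl⟩
    choose f' hf' using hRV
    choose g' hg' using hRW
    exact ⟨corDis_nonneg DX DY R, f', g', isInterleaving_corDis DX DY hf' hg'⟩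

theorem stmt_12_general
    (DX : Finset V → ℝ) (DY : Finset W → ℝ)
    (f : V → W) (g : W → V) (R : Finset (V × W))
    (hf : ∀ v : V, (v, f v) ∈ R) (hg : ∀ w : W, (g w, w) ∈ R) :
    IsInterleaving DX DY f g (corDis DX DY R) ∧ dIF DX DY ≤ 2 * dGHcor DX DY :=
  ⟨isInterleaving_corDis DX DY hf hg, dIF_le_two_mul_dGHcor DX DY⟩

/-- if a correspondence `R` contains the graphs of `f` and `g`, then
`(f, g)` is a `dis(R)`-interleaving; consequently `d_I^F ≤ 2 d_GH`. -/
theorem stmt_12 [Nonempty V] [Nonempty W]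
    (DX : Finset V → ℝ) (DY : Finset W → ℝ) (hX : Monot DX) (hY : Monot DY)
    (f : V → W) (g : W → V) (R : Finset (V × W))
    (hRV : ∀ v : V, ∃ w, (v, w) ∈ R) (hRW : ∀ w : W, ∃ v, (v, w) ∈ R)
    (hf : ∀ v : V, (v, f v) ∈ R) (hg : ∀ w : W, (g w, w) ∈ R) :
    IsInterleaving DX DY f g (corDis DX DY R) ∧ dIF DX DY ≤ 2 * dGHcor DX DY :=
  stmt_12_general DX DY f g R hf hg
end
end

section
/- Single vertex extension: let X^* be a filtered simplicial complex with vertex set V and monotone size function D_X, let w ∈ V and r ≥ 0, and define the extension X_{w,r}^* on V ∪ {v_0} (v_0 a new vertex) by D̃(α) = D_X(α) for nonempty α ⊆ V and D̃(α ∪ {v_0}) = D_X(α ∪ {w}) + r (with D̃({v_0}) = D_X({w}) + r). Then: (1) D̃ is monotone; (2) δ_{X_{w,r}}(v_0, w) = 0, hence d_I^F(X_{w,r}^*, X^*) = 0; (3) every tripod Z between X^* and X_{w,r}^* has dis(Z) ≥ r, hence d_GH(X_{w,r}^*, X^*) ≥ r/2. -/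
/-!
Adding `v₀ = none` as a copy of `w` lifted by `r` changes nothing up to interleaving: collapsing
`v₀` onto `w` and the inclusion `some : V → Option V` are a `0`-interleaving, because every simplex
containing `v₀` already has the size of the same simplex with `w` in place of `v₀`, plus `r ≥ 0`.
A tripod, however, must match the full vertex sets with each other, and their sizes differ by
exactly `r`.
-/

open Finset Function

noncomputable section
open scoped Classical

variable {V W U : Type} [Fintype V] [Fintype W] [Fintype U]

/-- The single vertex extension `X_{w,r}^*`: the new vertex is `none : Option V`. -/
def Dext (D : Finset V → ℝ) (w : V) (r : ℝ) : Finset (Option V) → ℝ := fun α =>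
  if none ∈ α then D (insert w (Finset.univ.filter fun v : V => some v ∈ α)) + r
  else D (Finset.univ.filter fun v : V => some v ∈ α)

lemma supSub_nonneg (g : Finset V → ℝ) : 0 ≤ supSub g :=
  (le_fold_max _).2 (Or.inl le_rfl)

lemma le_supSub (g : Finset V → ℝ) {α : Finset V} (hα : α.Nonempty) : g α ≤ supSub g :=
  (le_fold_max _).2 (Or.inr ⟨α, by simp [hα], le_rfl⟩)

lemma supSub_le_zero {g : Finset V → ℝ} (h : ∀ α : Finset V, α.Nonempty → g α ≤ 0) :
    supSub g ≤ 0 :=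
  (fold_max_le _).2 ⟨le_rfl, fun α hα => h α (mem_filter.1 hα).2⟩

lemma supSub_eq_zero {g : Finset V → ℝ} (h : ∀ α : Finset V, α.Nonempty → g α ≤ 0) :
    supSub g = 0 :=
  (supSub_le_zero h).antisymm (supSub_nonneg g)

lemma codegF_id_id (D : Finset V → ℝ) : codegF D D id id = 0 :=
  supSub_eq_zero fun α _ => by simp

omit [Fintype W] in
lemma codegInfF_le_codegF (DX : Finset V → ℝ) (DY : Finset W → ℝ) (f g : V → W) :
    codegInfF DX DY f g ≤ codegF DX DY f g := by
  apply csInf_le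
  · refine ⟨0, ?_⟩
    rintro c ⟨n, -, F, -, -, rfl⟩
    exact (le_fold_max _).2 (Or.inl le_rfl)
  · refine ⟨1, one_pos, fun i => if i = 0 then f else g, by simp, by simp, ?_⟩
    simp only [range_one, fold_singleton, reduceIte]
    exact (max_eq_left (supSub_nonneg _)).symm

lemma dIF_eq_zero_of_isInterleaving {DX : Finset V → ℝ} {DY : Finset W → ℝ} {f : V → W}
    {g : W → V} (h : IsInterleaving DX DY f g 0) : dIF DX DY = 0 := by
  apply le_antisymm
  · exact csInf_le ⟨0, fun _ hε => hε.1⟩ ⟨le_rfl, f, g, h⟩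
  · exact le_csInf ⟨0, le_rfl, f, g, h⟩ fun _ hε => hε.1

lemma abs_sub_univ_le_trdis {Z : Type} [Fintype Z] [Nonempty Z] (DX : Finset V → ℝ)
    (DY : Finset W → ℝ) {p : Z → V} {q : Z → W} (hp : Surjective p) (hq : Surjective q) :
    |DX univ - DY univ| ≤ trdis DX DY p q := by
  rw [trdis]
  simpa [image_univ_of_surjective hp, image_univ_of_surjective hq] using
    le_supSub (fun α : Finset Z => |DX (α.image p) - DY (α.image q)|) univ_nonempty

lemma half_le_dGHtri [Nonempty V] [Nonempty W] {DX : Finset V → ℝ} {DY : Finset W → ℝ} {c : ℝ}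
    (h : ∀ (Z : Type) [Fintype Z] (p : Z → V) (q : Z → W),
      Surjective p → Surjective q → c ≤ trdis DX DY p q) :
    c / 2 ≤ dGHtri DX DY := by
  have hc : c ≤ sInf { c : ℝ | ∃ (Z : Type) (_i : Fintype Z) (p : Z → V) (q : Z → W),
      Surjective p ∧ Surjective q ∧ c = trdis DX DY p q } := by
    refine le_csInf ⟨_, V × W, inferInstance, Prod.fst, Prod.snd,
      Prod.fst_surjective, Prod.snd_surjective, rfl⟩ ?_
    rintro _ ⟨Z, _, p, q, hp, hq, rfl⟩
    exact h Z p q hp hq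
  rw [dGHtri]
  linarith

section OptionFinset

variable {ι : Type*} {s : Finset (Option ι)}

lemma eraseNone_nonempty (hs : s.Nonempty) (h : none ∉ s) :
    (eraseNone s).Nonempty := by
  obtain ⟨_ | v, hv⟩ := hs
  · exact absurd hv h
  · exact ⟨v, mem_eraseNone.2 hv⟩

variable [DecidableEq ι] (a : ι)

lemma image_getD_of_none_mem (h : none ∈ s) :
    s.image (·.getD a) = insert a (eraseNone s) := by
  ext v
  simp [Option.exists, h, eq_comm]

lemma image_getD_of_none_notMem (h : none ∉ s) :
    s.image (·.getD a) = eraseNone s := by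
  ext v
  simp [Option.exists, h]

end OptionFinset

section SingleVertexExtension

variable (D : Finset V → ℝ) (w : V) (r : ℝ)

-- The definitions above decide equality on `Option V` by `Classical.propDecidable`; preferring it
-- here makes `insert`, `image` and `∪` in the statements below match theirs syntactically.
attribute [local instance high] Classical.propDecidable

lemma Dext_of_none_mem {α : Finset (Option V)} (h : none ∈ α) :
    Dext D w r α = D (insert w (eraseNone α)) + r := by
  simp only [Dext, if_pos h]
  congr 2
  ext; simp

lemma Dext_of_none_notMem {α : Finset (Option V)} (h : none ∉ α) :
    Dext D w r α = D (eraseNone α) := by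
  simp only [Dext, if_neg h]
  congr 1
  ext; simp

theorem monot_Dext (hr : 0 ≤ r) (hD : Monot D) : Monot (Dext D w r) := by
  intro α β hα hαβ
  have hsub : eraseNone α ⊆ eraseNone β := eraseNone.monotone hαβ
  by_cases hβ : none ∈ β
  · rw [Dext_of_none_mem D w r hβ]
    by_cases hα' : none ∈ α
    · rw [Dext_of_none_mem D w r hα']
      linarith [hD (insert_nonempty w _) (insert_subset_insert w hsub)]
    · rw [Dext_of_none_notMem D w r hα']
      linarith [hD (eraseNone_nonempty hα hα') (hsub.trans (subset_insert w _))]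
  · have hα' : none ∉ α := fun h => hβ (hαβ h)
    rw [Dext_of_none_notMem D w r hα', Dext_of_none_notMem D w r hβ]
    exact hD (eraseNone_nonempty hα hα') hsub

lemma Dext_insert_some_le_insert_none (hr : 0 ≤ r) (α : Finset (Option V)) :
    Dext D w r (insert (some w) α) ≤ Dext D w r (insert none α) := by
  have herase_some : eraseNone (insert (some w) α) = insert w (eraseNone α) := by ext; simp
  have herase_none : eraseNone (insert none α) = eraseNone α := by ext; simp
  rw [Dext_of_none_mem D w r (mem_insert_self none α), herase_none]
  by_cases hα : none ∈ α
  · rw [Dext_of_none_mem D w r (mem_insert_of_mem hα), herase_some, insert_idem]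
  · rw [Dext_of_none_notMem D w r (by simpa using hα), herase_some]
    linarith

theorem vqd_Dext_none_some (hr : 0 ≤ r) : vqd (Dext D w r) none (some w) = 0 :=
  supSub_eq_zero fun α _ => sub_nonpos.2 (Dext_insert_some_le_insert_none D w r hr α)

theorem degF_Dext_getD_le (hr : 0 ≤ r) : degF (Dext D w r) D (·.getD w) ≤ 0 := by
  refine supSub_le_zero fun α _ => ?_
  by_cases h : none ∈ α
  · rw [image_getD_of_none_mem w h, Dext_of_none_mem D w r h]
    linarith
  · rw [image_getD_of_none_notMem w h, Dext_of_none_notMem D w r h, sub_self]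

theorem degF_some_Dext_le : degF D (Dext D w r) some ≤ 0 := by
  refine supSub_le_zero fun α _ => ?_
  rw [Dext_of_none_notMem D w r (by simp), eraseNone_image_some, sub_self]

theorem codegF_Dext_some_getD_le :
    codegF (Dext D w r) (Dext D w r) (some ∘ (·.getD w)) id ≤ 0 := by
  refine supSub_le_zero fun α _ => ?_
  rw [image_id]
  by_cases h : none ∈ α
  · have herase : eraseNone (α.image (some ∘ (·.getD w)) ∪ α) = insert w (eraseNone α) := by
      ext; simp [Option.exists, h, eq_comm]
    rw [Dext_of_none_mem D w r (mem_union_right _ h), herase, insert_idem,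
      Dext_of_none_mem D w r h, sub_self]
  · rw [← image_image, image_getD_of_none_notMem w h, image_some_eraseNone,
      erase_eq_of_notMem h, union_self, sub_self]

theorem isInterleaving_Dext (hr : 0 ≤ r) :
    IsInterleaving (Dext D w r) D (·.getD w) some 0 :=
  ⟨degF_Dext_getD_le D w r hr, degF_some_Dext_le D w r,
    by simpa using (codegInfF_le_codegF _ _ _ _).trans (codegF_Dext_some_getD_le D w r),
    by simpa using (codegInfF_le_codegF D D id id).trans (codegF_id_id D).le⟩

lemma le_trdis_Dext {Z : Type} [Fintype Z] {p : Z → Option V} {q : Z → V} (hp : Surjective p)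
    (hq : Surjective q) : r ≤ trdis (Dext D w r) D p q := by
  obtain ⟨z, -⟩ := hp none
  have : Nonempty Z := ⟨z⟩
  have hle := abs_sub_univ_le_trdis (Dext D w r) D hp hq
  have herase : eraseNone (univ : Finset (Option V)) = univ := by ext; simp
  rw [Dext_of_none_mem D w r (mem_univ none), herase, insert_eq_of_mem (mem_univ w),
    add_sub_cancel_left] at hle
  exact (le_abs_self r).trans hle

end SingleVertexExtension

theorem stmt_19_general (D : Finset V → ℝ) (hD : Monot D) (w : V) (r : ℝ)
    (hr : 0 ≤ r) :
    Monot (Dext D w r) ∧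
    vqd (Dext D w r) (none : Option V) (some w) = 0 ∧
    dIF (Dext D w r) D = 0 ∧
    (∀ (Z : Type) [Fintype Z] (p : Z → Option V) (q : Z → V),
      Surjective p → Surjective q → r ≤ trdis (Dext D w r) D p q) ∧
    r / 2 ≤ dGHtri (Dext D w r) D := by
  have : Nonempty V := ⟨w⟩
  have tripod (Z : Type) [Fintype Z] (p : Z → Option V) (q : Z → V) (hp : Surjective p)
      (hq : Surjective q) : r ≤ trdis (Dext D w r) D p q :=
    le_trdis_Dext D w r hp hq
  exact ⟨monot_Dext D w r hr hD, vqd_Dext_none_some D w r hr,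
    dIF_eq_zero_of_isInterleaving (isInterleaving_Dext D w r hr), tripod, half_le_dGHtri tripod⟩

/-- the single vertex extension has monotone size function,
`δ(v₀, w) = 0` hence `d_I^F(X_{w,r}^*, X^*) = 0`, while every tripod between `X_{w,r}^*`
and `X^*` has distortion at least `r`, hence `d_GH(X_{w,r}^*, X^*) ≥ r/2`. -/
theorem stmt_19 [Nonempty V] (D : Finset V → ℝ) (hD : Monot D) (w : V) (r : ℝ)
    (hr : 0 ≤ r) :
    Monot (Dext D w r) ∧
    vqd (Dext D w r) (none : Option V) (some w) = 0 ∧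
    dIF (Dext D w r) D = 0 ∧
    (∀ (Z : Type) [Fintype Z] (p : Z → Option V) (q : Z → V),
      Surjective p → Surjective q → r ≤ trdis (Dext D w r) D p q) ∧
    r / 2 ≤ dGHtri (Dext D w r) D :=
  stmt_19_general D hD w r hr
end
end
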